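/- arXiv:2404.10740 — 2 statements merged into one kernel-verified Lean document; each statement's English description precedes it below -/
import Mathlib

section
/- Let X_1, X_2, X_3 be independent Boolean random variables where X_1 and X_2 each take the value true with probability 1/3 and X_3 takes the value true with probability p ∈ [0,1]. Then the probability that exactly one of X_1, X_2, X_3 is true equals 4/9, independently of the value of p. -/
/-!
The event that exactly one `X i` is true is the disjoint union over `i` of the events "only `X i`
is true", whose probabilities factor by independence. With `qᵢ = P(X i)` this gives
`q₀(1-q₁)(1-q₂) + (1-q₀)q₁(1-q₂) + (1-q₀)(1-q₁)q₂`, which for `q₀ = q₁ = 1/3` is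
`(4/9)(1-p) + (4/9)p`.
-/

open MeasureTheory ProbabilityTheory Function

namespace ExactlyOneTrue

variable {ι Ω : Type*} [DecidableEq ι]

def onlyTrueAt (X : ι → Ω → Bool) (i : ι) : Set Ω :=
  ⋂ j, X j ⁻¹' {decide (j = i)}

theorem setOf_existsUnique_eq_iUnion_onlyTrueAt (X : ι → Ω → Bool) :
    {ω | ∃! i, X i ω = true} = ⋃ i, onlyTrueAt X i := by
  ext ω
  simp only [onlyTrueAt, Set.mem_ofPred_eq, Set.mem_iUnion, Set.mem_iInter, Set.mem_preimage,
    Set.mem_singleton_iff, ExistsUnique]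
  refine exists_congr fun i =>
    ⟨fun ⟨hi, huniq⟩ j => ?_, fun h => ⟨by simpa using h i, fun j hj => ?_⟩⟩
  · by_cases hji : j = i
    · simp [hji, hi]
    · simpa [hji] using mt (huniq j) hji
  · simpa using (h j).symm.trans hj

theorem pairwise_disjoint_onlyTrueAt (X : ι → Ω → Bool) :
    Pairwise (Disjoint on onlyTrueAt X) := by
  intro i k hik
  refine Set.disjoint_left.2 fun ω hi hk => hik ?_
  have hi := Set.mem_iInter.1 hi i
  have hk := Set.mem_iInter.1 hk i
  simp_all

variable [MeasurableSpace Ω] {μ : Measure Ω} [IsProbabilityMeasure μ]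

theorem measureReal_preimage_false {Y : Ω → Bool} (hY : Measurable Y) :
    μ.real (Y ⁻¹' {false}) = 1 - μ.real {ω | Y ω = true} := by
  rw [← probReal_compl_eq_one_sub (measurableSet_eq_fun hY measurable_const)]
  congr 1
  ext ω
  simp

theorem measureReal_onlyTrueAt {X : ι → Ω → Bool} [Fintype ι]
    (hmeas : ∀ i, Measurable (X i)) (hindep : iIndepFun X μ) (i : ι) :
    μ.real (onlyTrueAt X i) =
      ∏ j, if j = i then μ.real {ω | X j ω = true} else 1 - μ.real {ω | X j ω = true} := by
  have hprod := congrArg ENNReal.toReal <| hindep.measure_inter_preimage_eq_mul Finset.univ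
    (sets := fun j => {decide (j = i)}) fun j _ => measurableSet_singleton _
  simp only [Finset.mem_univ, Set.iInter_true, ENNReal.toReal_prod, ← measureReal_def] at hprod
  rw [onlyTrueAt, hprod]
  refine Finset.prod_congr rfl fun j _ => ?_
  split_ifs with hji
  · simp [hji, Set.preimage]
  · simp [hji, measureReal_preimage_false (hmeas j)]

theorem measureReal_existsUnique_eq_sum_prod {X : ι → Ω → Bool} [Fintype ι]
    (hmeas : ∀ i, Measurable (X i)) (hindep : iIndepFun X μ) :
    μ.real {ω | ∃! i, X i ω = true} =
      ∑ i, ∏ j, if j = i then μ.real {ω | X j ω = true} else 1 - μ.real {ω | X j ω = true} := by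
  rw [setOf_existsUnique_eq_iUnion_onlyTrueAt, measureReal_iUnion_fintype
    (pairwise_disjoint_onlyTrueAt X)
    fun i => MeasurableSet.iInter fun j => hmeas j (measurableSet_singleton _)]
  simp only [measureReal_onlyTrueAt hmeas hindep]

end ExactlyOneTrue

open ExactlyOneTrue in
theorem aht_win_prob_general {Ω : Type*} [MeasurableSpace Ω]
    (μ : Measure Ω) [IsProbabilityMeasure μ]
    (X : Fin 3 → Ω → Bool)
    (hmeas : ∀ i, Measurable (X i))
    (hindep : iIndepFun X μ)
    (p : ℝ)
    (hX0 : (μ {ω | X 0 ω = true}).toReal = 1 / 3)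
    (hX1 : (μ {ω | X 1 ω = true}).toReal = 1 / 3)
    (hX2 : (μ {ω | X 2 ω = true}).toReal = p) :
    (μ {ω | ∃! i, X i ω = true}).toReal = 4 / 9 := by
  rw [← measureReal_def] at hX0 hX1 hX2 ⊢
  rw [measureReal_existsUnique_eq_sum_prod hmeas hindep]
  simp [Fin.sum_univ_three, Fin.prod_univ_three, hX0, hX1, hX2]
  ring

/-- Three independent Boolean random variables: two true with probability `1/3`, and one
true with probability `p ∈ [0,1]`. The probability that exactly one is true is `4/9`,
regardless of `p`. -/
theorem aht_win_prob {Ω : Type*} [MeasurableSpace Ω]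
    (μ : Measure Ω) [IsProbabilityMeasure μ]
    (X : Fin 3 → Ω → Bool)
    (hmeas : ∀ i, Measurable (X i))
    (hindep : iIndepFun X μ)
    (p : ℝ) (hp0 : 0 ≤ p) (hp1 : p ≤ 1)
    (hX0 : (μ {ω | X 0 ω = true}).toReal = 1 / 3)
    (hX1 : (μ {ω | X 1 ω = true}).toReal = 1 / 3)
    (hX2 : (μ {ω | X 2 ω = true}).toReal = p) :
    (μ {ω | ∃! i, X i ω = true}).toReal = 4 / 9 :=
  aht_win_prob_general μ X hmeas hindep p hX0 hX1 hX2
end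

section
/- The supremum over p ∈ [0,1] of (1 − p)(1/3 + p) equals 4/9, the supremum over p ∈ [0,1] of 1/3 + p/3 equals 2/3, and 4/9 < 2/3. Hence, in the three-agent bit matrix game with one uncontrolled agent selecting 1 with probability 1/3, the best winning probability achievable by two controlled agents using a common independent policy p is strictly smaller than the winning probability achievable by an asymmetric pair of controlled policies (one agent always selecting 0 and the other always selecting 1). -/
/-- The supremum over `p ∈ [0,1]` of `(1 - p) * (1/3 + p)` is `4/9`, the supremum over
`p ∈ [0,1]` of `1/3 + p/3` is `2/3`, and `4/9 < 2/3`: the best winning probability of a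
common independent policy for the two controlled agents is strictly smaller than that of
the asymmetric pair of policies. -/
theorem symmetric_sup_lt_asymmetric_sup :
    sSup ((fun p : ℝ => (1 - p) * (1 / 3 + p)) '' Set.Icc (0 : ℝ) 1) = 4 / 9 ∧
    sSup ((fun p : ℝ => 1 / 3 + p / 3) '' Set.Icc (0 : ℝ) 1) = 2 / 3 ∧
    (4 : ℝ) / 9 < 2 / 3 := by
  refine ⟨?_, ?_, by norm_num⟩
  · apply IsGreatest.csSup_eq
    constructor
    · exact ⟨1/3, ⟨by norm_num, by norm_num⟩, by norm_num⟩
    · rintro y ⟨p, ⟨hp0, hp1⟩, rfl⟩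
      nlinarith [sq_nonneg (p - 1/3)]
  · apply IsGreatest.csSup_eq
    constructor
    · exact ⟨1, ⟨by norm_num, le_refl 1⟩, by norm_num⟩
    · rintro y ⟨p, ⟨hp0, hp1⟩, rfl⟩
      linarith
end
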